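/- arXiv:2103.08904 — 2 statements merged into one kernel-verified Lean document; each statement's English description precedes it below -/
import Mathlib

section
/- For all nonnegative integers n and j, ∑_{k=j}^{n} C(n,k)·C(k,j)·(−1)^{n−k}·⟨1⟩_{n−k,λ}·(1)_{k−j,λ} = δ_{n,j}, where δ is the Kronecker delta. -/
/-!
Since `(-1)^r ⟨1⟩_{r,λ} = (-1)_{r,λ}`, and `C(n,k) C(k,j) = C(n,j) C(n-j,k-j)`, the sum is
`C(n,j)` times `∑_m C(n-j,m) (1)_{m,λ} (-1)_{n-j-m,λ}`, which by the Vandermonde identity for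
λ-falling factorials is `C(n,j) (0)_{n-j,λ} = δ_{n,j}`.
-/

open Finset

noncomputable def dff (lam x : ℝ) (n : ℕ) : ℝ := ∏ i ∈ Finset.range n, (x - i * lam)

noncomputable def drf (lam x : ℝ) (n : ℕ) : ℝ := ∏ i ∈ Finset.range n, (x + i * lam)

section FallingFactorial

variable (lam : ℝ)

lemma dff_succ (x : ℝ) (n : ℕ) : dff lam x (n + 1) = dff lam x n * (x - n * lam) :=
  prod_range_succ _ n

lemma dff_zero_left (n : ℕ) : dff lam 0 n = if n = 0 then 1 else 0 := by
  cases n with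
  | zero => simp [dff]
  | succ n => exact prod_eq_zero (mem_range.mpr n.succ_pos) (by simp)

lemma neg_one_pow_mul_drf (x : ℝ) (m : ℕ) : (-1 : ℝ) ^ m * drf lam x m = dff lam (-x) m := by
  have hneg := prod_neg (s := range m) fun i : ℕ ↦ x + i * lam
  rw [card_range] at hneg
  rw [drf, dff, ← hneg]
  exact prod_congr rfl fun _ _ ↦ by ring

theorem dff_add (x y : ℝ) (n : ℕ) :
    dff lam (x + y) n =
      ∑ ij ∈ antidiagonal n, (n.choose ij.1 : ℝ) * (dff lam x ij.1 * dff lam y ij.2) := by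
  induction n with
  | zero => simp [dff]
  | succ n ih =>
    rw [sum_antidiagonal_choose_succ_mul (fun i j ↦ dff lam x i * dff lam y j), ← sum_add_distrib,
      dff_succ, ih, sum_mul]
    refine sum_congr rfl fun ij hij ↦ ?_
    rw [HasAntidiagonal.mem_antidiagonal] at hij
    have hsplit : x + y - n * lam = (y - ij.2 * lam) + (x - ij.1 * lam) := by
      rw [← hij, Nat.cast_add]; ring
    rw [hsplit, dff_succ, dff_succ, ← Nat.choose_symm_of_eq_add hij.symm]
    ring

lemma sum_choose_mul_dff_one_mul_dff_neg_one (N : ℕ) :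
    ∑ m ∈ range (N + 1), (N.choose m : ℝ) * (dff lam 1 m * dff lam (-1) (N - m)) =
      if N = 0 then 1 else 0 := by
  rw [← Nat.sum_antidiagonal_eq_sum_range_succ
      (fun i k ↦ (N.choose i : ℝ) * (dff lam 1 i * dff lam (-1) k)),
    ← dff_add, add_neg_cancel, dff_zero_left]

end FallingFactorial

theorem stmt2_general (lam : ℝ) (n j : ℕ) :
    ∑ k ∈ Finset.Icc j n, (Nat.choose n k : ℝ) * (Nat.choose k j : ℝ) *
      (-1 : ℝ) ^ (n - k) * drf lam 1 (n - k) * dff lam 1 (k - j)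
      = if n = j then 1 else 0 := by
  rcases lt_or_ge n j with hnj | hjn
  · rw [Icc_eq_empty (by omega), sum_empty, if_neg (by omega)]
  obtain ⟨N, rfl⟩ := Nat.exists_eq_add_of_le hjn
  have hterm : ∀ m ∈ range (N + 1),
      ((j + N).choose (j + m) : ℝ) * ((j + m).choose j : ℝ) * (-1 : ℝ) ^ (j + N - (j + m)) *
          drf lam 1 (j + N - (j + m)) * dff lam 1 (j + m - j) =
        ((j + N).choose j : ℝ) * ((N.choose m : ℝ) * (dff lam 1 m * dff lam (-1) (N - m))) := by
    intro m _
    have hchoose := Nat.choose_mul (n := j + N) (Nat.le_add_right j m)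
    simp only [Nat.add_sub_add_left, Nat.add_sub_cancel_left] at hchoose ⊢
    rw [mul_assoc _ _ (drf lam 1 _), neg_one_pow_mul_drf, ← Nat.cast_mul, hchoose, Nat.cast_mul]
    ring
  rw [← Ico_add_one_right_eq_Icc, sum_Ico_eq_sum_range, Nat.add_assoc,
    Nat.add_sub_cancel_left, sum_congr rfl hterm, ← mul_sum,
    sum_choose_mul_dff_one_mul_dff_neg_one]
  split_ifs with hN <;> simp_all

theorem stmt2 (lam : ℝ) (hlam : lam ≠ 0) (n j : ℕ) :
    ∑ k ∈ Finset.Icc j n, (Nat.choose n k : ℝ) * (Nat.choose k j : ℝ) *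
      (-1 : ℝ) ^ (n - k) * drf lam 1 (n - k) * dff lam 1 (k - j)
      = if n = j then 1 else 0 :=
  stmt2_general lam n j
end

section
/- For every positive integer m and nonzero real λ, V_{m,λ}(n,0) = (−1)^n·(m+1)(2m+1)⋯((n−1)m+1) for all n ≥ 1, and V_{m,λ}(0,0) = 1, where V_{m,λ}(n,k) are the degenerate Whitney numbers of the first kind. -/
/-!
At `x = -1/m` the argument `m x + 1` of the degenerate falling factorials vanishes, and
`(0)_{k,λ} = 0` for every `k ≥ 1`, so the expansion collapses to its constant term:
`V(n,0) = m^n (-1/m)_n = (-1)^n ∏_{i<n} (i m + 1)`.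
-/

open Finset

theorem dff_zero_left_succ (lam : ℝ) (n : ℕ) : dff lam 0 (n + 1) = 0 :=
  prod_eq_zero (mem_range.mpr n.succ_pos) (by simp)

theorem sum_range_mul_dff_zero_left (lam : ℝ) (c : ℕ → ℝ) (n : ℕ) :
    ∑ k ∈ range (n + 1), c k * dff lam 0 k = c 0 := by
  simp only [sum_range_succ', dff_zero_left_succ, mul_zero, sum_const_zero, zero_add]
  simp [dff]

theorem pow_mul_dff_one_neg_inv {m : ℝ} (hm : m ≠ 0) (n : ℕ) :
    m ^ n * dff 1 (-1 / m) n = (-1) ^ n * ∏ i ∈ range n, ((i : ℝ) * m + 1) := by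
  rw [dff, pow_eq_prod_const m, pow_eq_prod_const (-1), ← prod_mul_distrib, ← prod_mul_distrib]
  refine prod_congr rfl fun i _ => ?_
  field_simp
  ring

theorem stmt7_general (m : ℕ) (hm : 1 ≤ m) (lam : ℝ) (V : ℕ → ℕ → ℝ)
    (hV : ∀ (x : ℝ) (n : ℕ), (m : ℝ) ^ n * dff 1 x n =
      ∑ k ∈ Finset.range (n + 1), V n k * dff lam ((m : ℝ) * x + 1) k) :
    (∀ n : ℕ, 1 ≤ n →
      V n 0 = (-1 : ℝ) ^ n * ∏ i ∈ Finset.Icc 1 (n - 1), ((i : ℝ) * m + 1)) ∧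
    V 0 0 = 1 := by
  have hm0 : (m : ℝ) ≠ 0 := by positivity
  have hV0 : ∀ n, V n 0 = (-1) ^ n * ∏ i ∈ range n, ((i : ℝ) * m + 1) := fun n => by
    have h := hV (-1 / m) n
    rw [mul_div_cancel₀ (-1) hm0, neg_add_cancel, sum_range_mul_dff_zero_left,
      pow_mul_dff_one_neg_inv hm0] at h
    exact h.symm
  refine ⟨fun n hn => ?_, by simpa using hV0 0⟩
  obtain ⟨k, rfl⟩ := Nat.exists_eq_add_of_le' hn
  rw [hV0, prod_range_eq_mul_Ico _ hn, Ico_add_one_right_eq_Icc]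
  simp

theorem stmt7 (m : ℕ) (hm : 1 ≤ m) (lam : ℝ) (hlam : lam ≠ 0) (V : ℕ → ℕ → ℝ)
    (hV : ∀ (x : ℝ) (n : ℕ), (m : ℝ) ^ n * dff 1 x n =
      ∑ k ∈ Finset.range (n + 1), V n k * dff lam ((m : ℝ) * x + 1) k) :
    (∀ n : ℕ, 1 ≤ n →
      V n 0 = (-1 : ℝ) ^ n * ∏ i ∈ Finset.Icc 1 (n - 1), ((i : ℝ) * m + 1)) ∧
    V 0 0 = 1 :=
  stmt7_general m hm lam V hV
end
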